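/- arXiv:1212.2602 — 5 statements merged into one kernel-verified Lean document; each statement's English description precedes it below -/
import Mathlib

section
/- Let (X,μ) be a probability space and T a measure-preserving transformation such that T^k is ergodic for some k ≥ 1. If ν is a T×T-invariant probability measure on X×X with both marginals equal to μ and ν is invariant under Id×T^k (i.e., ν(A × B) = ν(A × T^{-k}B) for all measurable A, B), then ν = μ × μ. -/
/-!
Invariance under `T × T` and under `id × T^k` gives invariance under `T^k × id`. Hence, for each
measurable `t`, the measure `s ↦ ν (s ×ˢ t)` is `T^k`-invariant and absolutely continuous with
respect to the first marginal `μ`; by ergodicity of `T^k` it is a multiple of `μ`, and evaluating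
at `s = univ` identifies the multiple as `ν.snd t = μ t`.
-/

open MeasureTheory Measure Set

namespace MeasureTheory

variable {X Y : Type*} [MeasurableSpace X] [MeasurableSpace Y] {ν : Measure (X × Y)}
  {f : X → X} {g : Y → Y}

theorem MeasurePreserving.prodMap_id_of_id_prodMap (hf : Measurable f)
    (hfg : MeasurePreserving (Prod.map f g) ν ν) (hg : MeasurePreserving (Prod.map id g) ν ν) :
    MeasurePreserving (Prod.map f id) ν ν := by
  refine ⟨hf.prodMap measurable_id, ?_⟩
  calc map (Prod.map f id) ν = map (Prod.map f id) (map (Prod.map id g) ν) := by rw [hg.map_eq]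
    _ = map (Prod.map f g) ν := map_map (hf.prodMap measurable_id) hg.measurable
    _ = ν := hfg.map_eq

theorem Measure.fst_restrict_snd_preimage_apply (ν : Measure (X × Y)) {s : Set X}
    (hs : MeasurableSet s) (t : Set Y) :
    (ν.restrict (Prod.snd ⁻¹' t)).fst s = ν (s ×ˢ t) := by
  rw [fst_apply hs, restrict_apply (measurable_fst hs), Set.prod_eq]

theorem MeasurePreserving.fst_restrict_snd_preimage (hf : Measurable f)
    (hν : MeasurePreserving (Prod.map f id) ν ν) {t : Set Y} (ht : MeasurableSet t) :
    MeasurePreserving f (ν.restrict (Prod.snd ⁻¹' t)).fst (ν.restrict (Prod.snd ⁻¹' t)).fst := by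
  refine ⟨hf, ext fun s hs ↦ ?_⟩
  rw [map_apply hf hs, fst_restrict_snd_preimage_apply _ (hf hs),
    fst_restrict_snd_preimage_apply _ hs,
    show (f ⁻¹' s) ×ˢ t = Prod.map f id ⁻¹' (s ×ˢ t) from rfl,
    hν.measure_preimage (hs.prod ht).nullMeasurableSet]

theorem Ergodic.eq_prod_of_measurePreserving_prodMap_id [IsProbabilityMeasure ν]
    (hf : Ergodic f ν.fst) (hν : MeasurePreserving (Prod.map f id) ν ν) :
    ν = ν.fst.prod ν.snd := by
  refine (Measure.prod_eq fun s t hs ht ↦ ?_).symm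
  obtain ⟨c, hc⟩ := hf.eq_smul_of_absolutelyContinuous
    (hν.fst_restrict_snd_preimage hf.measurable ht)
    (absolutelyContinuous_of_le (fst_mono restrict_le_self))
  have hct : ν.snd t = c := by
    rw [snd_apply ht, ← univ_prod, ← fst_restrict_snd_preimage_apply ν .univ t, hc]
    simp
  rw [← fst_restrict_snd_preimage_apply ν hs t, hc, ← hct, Measure.smul_apply, smul_eq_mul,
    mul_comm]

end MeasureTheory

theorem selfJoining_invariant_under_id_prod_ergodic_power_eq_prod_general
    {X : Type*} [MeasurableSpace X] (μ : Measure X)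
    (T : X → X) (hT : MeasurePreserving T μ μ)
    (k : ℕ) (hErg : Ergodic (T^[k]) μ)
    (ν : Measure (X × X)) [IsProbabilityMeasure ν]
    (hinv : Measure.map (Prod.map T T) ν = ν)
    (hfst : ν.fst = μ) (hsnd : ν.snd = μ)
    (hkinv : Measure.map (Prod.map id (T^[k])) ν = ν) :
    ν = μ.prod μ := by
  have hTT : MeasurePreserving (Prod.map T T) ν ν :=
    ⟨hT.measurable.prodMap hT.measurable, hinv⟩
  have hTkTk : MeasurePreserving (Prod.map (T^[k]) (T^[k])) ν ν := by
    simpa only [Prod.map_iterate] using hTT.iterate k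
  have hTkid : MeasurePreserving (Prod.map (T^[k]) id) ν ν :=
    hTkTk.prodMap_id_of_id_prodMap hErg.measurable ⟨measurable_id.prodMap hErg.measurable, hkinv⟩
  rw [← hfst] at hErg
  rw [hErg.eq_prod_of_measurePreserving_prodMap_id hTkid, hfst, hsnd]

/-- If `T` is measure preserving, `T^k` is ergodic for some `k ≥ 1`, and `ν` is a
self-joining of `T` (a `T×T`-invariant probability measure on `X × X` with both marginals `μ`)
which is moreover invariant under `Id × T^k`, then `ν = μ × μ`. -/
theorem selfJoining_invariant_under_id_prod_ergodic_power_eq_prod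
    {X : Type*} [MeasurableSpace X] (μ : Measure X) [IsProbabilityMeasure μ]
    (T : X → X) (hT : MeasurePreserving T μ μ)
    (k : ℕ) (hk : 1 ≤ k) (hErg : Ergodic (T^[k]) μ)
    (ν : Measure (X × X)) [IsProbabilityMeasure ν]
    (hinv : Measure.map (Prod.map T T) ν = ν)
    (hfst : ν.fst = μ) (hsnd : ν.snd = μ)
    (hkinv : Measure.map (Prod.map id (T^[k])) ν = ν) :
    ν = μ.prod μ :=
  selfJoining_invariant_under_id_prod_ergodic_power_eq_prod_general μ T hT k hErg ν hinv hfst hsnd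
    hkinv
end

section
/- Let T be an ergodic measure-preserving transformation of a probability space (X,μ), viewed as a unitary operator on L²(X,μ), and let P be a bounded operator on L²(X,μ) satisfying T^m P = P for some m ≠ 0 with T^m ergodic. If P is Markov (positivity-preserving, P1 = 1, P*1 = 1), then P = Θ, the orthogonal projection onto constant functions. -/
/-! Since `V P = P`, every `P f` is invariant under `T^m`, hence a.e. constant by ergodicity;
the constant is `⟨P f, 1⟩ = ⟨f, P* 1⟩ = ⟨f, 1⟩ = ∫ f`, so `⟨P f, g⟩ = (∫ f)(∫ g)`. -/

open MeasureTheory Filter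

variable {X : Type*} [MeasurableSpace X]

noncomputable def oneL2 (μ : Measure X) [IsProbabilityMeasure μ] : Lp ℝ 2 μ :=
  Lp.const 2 μ (1 : ℝ)

def IsMarkovOp (μ : Measure X) [IsProbabilityMeasure μ]
    (P : Lp ℝ 2 μ →L[ℝ] Lp ℝ 2 μ) : Prop :=
  (∀ f : Lp ℝ 2 μ, 0 ≤ᵐ[μ] (f : X → ℝ) → 0 ≤ᵐ[μ] (P f : X → ℝ)) ∧
    P (oneL2 μ) = oneL2 μ ∧ ContinuousLinearMap.adjoint P (oneL2 μ) = oneL2 μ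

lemma comp_ae_eq_of_ae_eq_comp_inv {μ : Measure X} {β : Type*} {g : X → β}
    (σ : Equiv.Perm X) (hσ : Measure.QuasiMeasurePreserving σ μ μ)
    (h : g =ᵐ[μ] fun x => g (σ⁻¹ x)) : g ∘ σ =ᵐ[μ] g :=
  (hσ.ae_eq_comp h).trans (Eventually.of_forall fun x => by simp)

lemma Ergodic.ae_eq_integral_of_comp_ae_eq {μ : Measure X} [IsProbabilityMeasure μ]
    {f : X → X} {g : X → ℝ} (hf : Ergodic f μ) (hg : AEStronglyMeasurable g μ)
    (hg_inv : g ∘ f =ᵐ[μ] g) : g =ᵐ[μ] fun _ => ∫ x, g x ∂μ := by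
  obtain ⟨c, hc⟩ := hf.ae_eq_const_of_ae_eq_comp_ae hg hg_inv
  have hc_eq : ∫ x, g x ∂μ = c := by simp [integral_congr_ae hc]
  rwa [hc_eq]

lemma inner_oneL2_right (μ : Measure X) [IsProbabilityMeasure μ] (f : Lp ℝ 2 μ) :
    (inner ℝ f (oneL2 μ) : ℝ) = ∫ x, f x ∂μ := by
  rw [L2.inner_def]
  refine integral_congr_ae ?_
  filter_upwards [Lp.coeFn_const (α := X) 2 μ (1 : ℝ)] with x hx
  simp [oneL2]

lemma integral_apply_eq_integral_of_adjoint_oneL2 {μ : Measure X} [IsProbabilityMeasure μ]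
    {P : Lp ℝ 2 μ →L[ℝ] Lp ℝ 2 μ} (hP : ContinuousLinearMap.adjoint P (oneL2 μ) = oneL2 μ)
    (f : Lp ℝ 2 μ) : ∫ x, P f x ∂μ = ∫ x, f x ∂μ := by
  rw [← inner_oneL2_right, ← ContinuousLinearMap.adjoint_inner_right, hP, inner_oneL2_right]

lemma L2.inner_eq_mul_integral_of_ae_eq_const {μ : Measure X} {u : Lp ℝ 2 μ} {c : ℝ}
    (hu : (u : X → ℝ) =ᵐ[μ] fun _ => c) (g : Lp ℝ 2 μ) :
    (inner ℝ u g : ℝ) = c * ∫ x, g x ∂μ := by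
  rw [L2.inner_def, ← integral_const_mul]
  refine integral_congr_ae ?_
  filter_upwards [hu] with x hx
  simp [hx, mul_comm]

theorem markov_fixed_by_ergodic_power_eq_proj_general
    (μ : Measure X) [IsProbabilityMeasure μ]
    (T : X ≃ X)
    (m : ℤ) (hErg : Ergodic ⇑(T ^ m) μ)
    (V : Lp ℝ 2 μ →L[ℝ] Lp ℝ 2 μ)
    (hV : ∀ f : Lp ℝ 2 μ, (V f : X → ℝ) =ᵐ[μ] fun x => f (⇑(T ^ (-m)) x))
    (P : Lp ℝ 2 μ →L[ℝ] Lp ℝ 2 μ) (hP : IsMarkovOp μ P)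
    (hVP : V ∘L P = P) :
    ∀ f g : Lp ℝ 2 μ,
      (inner ℝ (P f) g : ℝ) = (∫ x, f x ∂μ) * ∫ x, g x ∂μ := by
  intro f g
  have hPf_fixed : (P f : X → ℝ) =ᵐ[μ] fun x => P f ((T ^ m)⁻¹ x) := by
    simpa [zpow_neg, ← ContinuousLinearMap.comp_apply, hVP] using hV (P f)
  have hPf_const : (P f : X → ℝ) =ᵐ[μ] fun _ => ∫ x, f x ∂μ := by
    rw [← integral_apply_eq_integral_of_adjoint_oneL2 hP.2.2]
    exact hErg.ae_eq_integral_of_comp_ae_eq (Lp.aestronglyMeasurable _)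
      (comp_ae_eq_of_ae_eq_comp_inv _ hErg.quasiMeasurePreserving hPf_fixed)
  exact L2.inner_eq_mul_integral_of_ae_eq_const hPf_const g

/-- if `P` is a Markov operator on `L²(X, μ)` with `T^m P = P` for some `m ≠ 0`
such that `T^m` is ergodic (`V` below denotes the Koopman operator of `T^m`, i.e. `T^m` as an
operator), then `P = Θ`, the orthogonal projection onto the constants:
`⟨P f, g⟩ = (∫ f)(∫ g)` for all `f, g`. -/
theorem markov_fixed_by_ergodic_power_eq_proj
    (μ : Measure X) [IsProbabilityMeasure μ]
    (T : X ≃ X) (hT : MeasurePreserving T μ μ) (hTsymm : MeasurePreserving T.symm μ μ)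
    (hErgT : Ergodic ⇑T μ)
    (m : ℤ) (hm : m ≠ 0) (hErg : Ergodic ⇑(T ^ m) μ)
    (V : Lp ℝ 2 μ →L[ℝ] Lp ℝ 2 μ)
    (hV : ∀ f : Lp ℝ 2 μ, (V f : X → ℝ) =ᵐ[μ] fun x => f (⇑(T ^ (-m)) x))
    (P : Lp ℝ 2 μ →L[ℝ] Lp ℝ 2 μ) (hP : IsMarkovOp μ P)
    (hVP : V ∘L P = P) :
    ∀ f g : Lp ℝ 2 μ,
      (inner ℝ (P f) g : ℝ) = (∫ x, f x ∂μ) * ∫ x, g x ∂μ :=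
  markov_fixed_by_ergodic_power_eq_proj_general μ T m hErg V hV P hP hVP
end

section
/- Let T be a measure-preserving transformation of a probability space (X,μ) such that T^k is ergodic. Suppose ν is a self-joining of T and ν is a convex combination ν = Σ_{i=0}^{r-1} a_i (Id × T^i)η of the measures (Id × T^i)η for some probability measure η on X×X, with at least two coefficients a_n and a_{n+k} (k > 0) nonzero. If ν is ergodic for T×T, then ν = (Id × T^k)ν. -/
/-!
An ergodic measure is an extreme point of the invariant probability measures, so every
`(Id × T^i) η` carrying a nonzero coefficient in the decomposition of `ν` (each of them is
`T × T`-invariant because `Id × T^i` commutes with `T × T`) equals `ν`. Comparing the indices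
`n` and `n + k` gives `ν = (Id × T^(n+k)) η = (Id × T^k) (Id × T^n) η = (Id × T^k) ν`.
-/

open MeasureTheory Finset
open scoped NNReal ENNReal

theorem Function.Commute.prodMap {α β : Type*} {f f' : α → α} {g g' : β → β}
    (hf : Function.Commute f f') (hg : Function.Commute g g') :
    Function.Commute (Prod.map f g) (Prod.map f' g') :=
  fun p => Prod.ext (hf p.1) (hg p.2)

namespace MeasureTheory

variable {α : Type*} [MeasurableSpace α]

theorem Measure.absolutelyContinuous_finset_sum_smul {ι : Type*} {s : Finset ι}
    {c : ι → ℝ≥0∞} {m : ι → Measure α} {i : ι} (hi : i ∈ s) (hc : c i ≠ 0) :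
    m i ≪ ∑ j ∈ s, c j • m j :=
  (Measure.absolutelyContinuous_smul hc).trans <|
    Measure.absolutelyContinuous_of_le <|
      single_le_sum (f := fun j => c j • m j) (fun _ _ => Measure.zero_le _) hi

theorem MeasurePreserving.map_of_commute {μ : Measure α} {f g : α → α}
    (hf : MeasurePreserving f μ μ) (hg : Measurable g) (hgf : Function.Commute g f) :
    MeasurePreserving f (μ.map g) (μ.map g) :=
  .of_semiconj ⟨hg, rfl⟩ hf hgf hf.measurable

theorem Ergodic.eq_of_eq_finset_sum_smul {ι : Type*} {f : α → α} {ν : Measure α}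
    [IsProbabilityMeasure ν] {s : Finset ι} {c : ι → ℝ≥0∞} {m : ι → Measure α} {i : ι}
    [IsProbabilityMeasure (m i)] (hν : Ergodic f ν) (hsum : ν = ∑ j ∈ s, c j • m j)
    (hi : i ∈ s) (hc : c i ≠ 0) (hm : MeasurePreserving f (m i) (m i)) : m i = ν :=
  hν.eq_of_absolutelyContinuous hm <| hsum ▸ Measure.absolutelyContinuous_finset_sum_smul hi hc

end MeasureTheory

theorem ergodic_convex_combination_selfJoining_marginal_invariance_general
    {X : Type*} [MeasurableSpace X] (μ : Measure X)
    (T : X → X) (hT : MeasurePreserving T μ μ)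
    (k : ℕ)
    (η : Measure (X × X)) [IsProbabilityMeasure η]
    (hηinv : Measure.map (Prod.map T T) η = η)
    (ν : Measure (X × X)) [IsProbabilityMeasure ν]
    (r : ℕ) (a : ℕ → ℝ≥0)
    (n : ℕ) (hnk : n + k < r) (han : a n ≠ 0) (hank : a (n + k) ≠ 0)
    (hcomb : ν = ∑ i ∈ Finset.range r,
      (a i : ℝ≥0∞) • Measure.map (Prod.map id (T^[i])) η)
    (hνerg : Ergodic (Prod.map T T) ν) :
    ν = Measure.map (Prod.map id (T^[k])) ν := by
  have hTm := hT.measurable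
  have hshift (i : ℕ) : Measurable (Prod.map (id : X → X) T^[i]) :=
    measurable_id.prodMap (hTm.iterate i)
  have hη : MeasurePreserving (Prod.map T T) η η := ⟨hTm.prodMap hTm, hηinv⟩
  have hcomponent {i : ℕ} (hi : i < r) (hai : a i ≠ 0) :
      Measure.map (Prod.map id T^[i]) η = ν := by
    have := Measure.isProbabilityMeasure_map (μ := η) (hshift i).aemeasurable
    exact hνerg.eq_of_eq_finset_sum_smul (m := fun j => Measure.map (Prod.map id T^[j]) η)
      hcomb (mem_range.2 hi) (ENNReal.coe_ne_zero.2 hai)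
      (hη.map_of_commute (hshift i) (.prodMap .id_left (.iterate_self T i)))
  calc ν = Measure.map (Prod.map id T^[n + k]) η := (hcomponent hnk hank).symm
    _ = Measure.map (Prod.map id T^[k]) (Measure.map (Prod.map id T^[n]) η) := by
      rw [Measure.map_map (hshift k) (hshift n), Prod.map_comp_map, Function.comp_id,
        ← Function.iterate_add, add_comm]
    _ = Measure.map (Prod.map id T^[k]) ν := by rw [hcomponent (by omega) han]

/-- If `T^k` is ergodic, `ν` is a self-joining of `T` which is an ergodic
(for `T × T`) convex combination `ν = ∑_{i<r} a_i (Id × T^i) η` of the pushforwards of a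
probability measure `η` on `X × X` (each a self-joining of `T`), with two coefficients
`a_n ≠ 0` and `a_{n+k} ≠ 0` (`k > 0`), then `ν = (Id × T^k) ν`. -/
theorem ergodic_convex_combination_selfJoining_marginal_invariance
    {X : Type*} [MeasurableSpace X] (μ : Measure X) [IsProbabilityMeasure μ]
    (T : X → X) (hT : MeasurePreserving T μ μ)
    (k : ℕ) (hk : 0 < k) (hErgk : Ergodic (T^[k]) μ)
    (η : Measure (X × X)) [IsProbabilityMeasure η]
    (hηinv : Measure.map (Prod.map T T) η = η)
    (hηfst : η.fst = μ) (hηsnd : η.snd = μ)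
    (ν : Measure (X × X)) [IsProbabilityMeasure ν]
    (hνinv : Measure.map (Prod.map T T) ν = ν)
    (hνfst : ν.fst = μ) (hνsnd : ν.snd = μ)
    (r : ℕ) (a : ℕ → ℝ≥0) (hsum : ∑ i ∈ Finset.range r, a i = 1)
    (n : ℕ) (hnk : n + k < r) (han : a n ≠ 0) (hank : a (n + k) ≠ 0)
    (hcomb : ν = ∑ i ∈ Finset.range r,
      (a i : ℝ≥0∞) • Measure.map (Prod.map id (T^[i])) η)
    (hνerg : Ergodic (Prod.map T T) ν) :
    ν = Measure.map (Prod.map id (T^[k])) ν :=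
  ergodic_convex_combination_selfJoining_marginal_invariance_general μ T hT k η hηinv ν r a n hnk
    han hank hcomb hνerg
end

section
/- Let T be the Koopman operator of an ergodic measure-preserving transformation on L²(X,μ) and let 0 < a < 1. Then the powers P^n of the Markov operator P = aI + (1-a)T converge to Θ in the weak operator topology as n → ∞, where Θ is the orthogonal projection onto constants, provided T is weakly mixing. -/
/-!
For an isometry `U` of a real inner product space and `P = a • 1 + (1 - a) • U`, expanding the
square gives `‖P x‖² = ‖x‖² - a (1 - a) ‖x - U x‖²`. Along an orbit of `P` the squared norms thus
drop by summable amounts, so `P ^ n (x - U x) → 0` in norm. Since the `P ^ n` are contractions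
this extends to the closure of the range of `U - 1`, which is the orthogonal complement of the
fixed space of `U`; hence `P ^ n` converges strongly to the projection onto the fixed space. For
the Koopman operator of an ergodic map the fixed space consists of the constants, and the
projection of `f` is `(∫ f) • 1`.
-/

open MeasureTheory Filter Topology

section ConvexCombination

variable {E : Type*} [NormedAddCommGroup E] [InnerProductSpace ℝ E] {U : E →L[ℝ] E} {a : ℝ}

theorem norm_smul_add_smul_sq (x y : E) :
    ‖a • x + (1 - a) • y‖ ^ 2 = a * ‖x‖ ^ 2 + (1 - a) * ‖y‖ ^ 2 - a * (1 - a) * ‖x - y‖ ^ 2 := by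
  rw [norm_add_sq_real, norm_sub_sq_real, norm_smul, norm_smul, real_inner_smul_left,
    real_inner_smul_right, Real.norm_eq_abs, Real.norm_eq_abs, mul_pow, mul_pow, sq_abs, sq_abs]
  ring

theorem norm_sq_convexComb_apply (hU : ∀ x, ‖U x‖ = ‖x‖) (x : E) :
    ‖(a • (1 : E →L[ℝ] E) + (1 - a) • U) x‖ ^ 2 = ‖x‖ ^ 2 - a * (1 - a) * ‖x - U x‖ ^ 2 := by
  rw [add_apply, smul_apply, smul_apply, one_apply_eq_self, norm_smul_add_smul_sq, hU]
  ring

theorem lipschitzWith_one_convexComb (hU : ∀ x, ‖U x‖ = ‖x‖) (ha₀ : 0 ≤ a) (ha₁ : a ≤ 1) :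
    LipschitzWith 1 (a • (1 : E →L[ℝ] E) + (1 - a) • U) := by
  refine LipschitzWith.of_dist_le_mul fun x y => ?_
  rw [NNReal.coe_one, one_mul, dist_eq_norm, dist_eq_norm, ← map_sub]
  refine pow_le_pow_iff_left₀ (norm_nonneg _) (norm_nonneg _) two_ne_zero |>.mp ?_
  rw [norm_sq_convexComb_apply hU]
  have hc : 0 ≤ a * (1 - a) := mul_nonneg ha₀ (sub_nonneg.mpr ha₁)
  nlinarith [norm_nonneg (x - y - U (x - y))]

theorem tendsto_pow_convexComb_apply_sub (hU : ∀ x, ‖U x‖ = ‖x‖) (ha₀ : 0 < a) (ha₁ : a < 1)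
    (x : E) :
    Tendsto (fun n => ((a • (1 : E →L[ℝ] E) + (1 - a) • U) ^ n) (x - U x)) atTop (𝓝 0) := by
  set P : E →L[ℝ] E := a • 1 + (1 - a) • U
  have hc : 0 < a * (1 - a) := mul_pos ha₀ (sub_pos.mpr ha₁)
  have hPU : ∀ n (y : E), (P ^ n) (y - U y) = (P ^ n) y - U ((P ^ n) y) := fun n y => by
    have hcomm : Commute U (P ^ n) := by
      refine Commute.pow_right ?_ n
      simp only [P, Commute.add_right, Commute.smul_right, Commute.one_right, Commute.refl]
    rw [map_sub, ← mul_apply_eq_comp, ← mul_apply_eq_comp, hcomm.eq]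
  have hdecr : ∀ n, a * (1 - a) * ‖(P ^ n) (x - U x)‖ ^ 2 =
      ‖(P ^ n) x‖ ^ 2 - ‖(P ^ (n + 1)) x‖ ^ 2 := by
    intro n
    rw [hPU, pow_succ' P n, mul_apply_eq_comp, norm_sq_convexComb_apply hU]
    ring
  have hsum : Summable fun n => a * (1 - a) * ‖(P ^ n) (x - U x)‖ ^ 2 := by
    refine summable_of_sum_range_le (c := ‖x‖ ^ 2) (fun n => by positivity) fun n => ?_
    rw [Finset.sum_congr rfl fun k _ => hdecr k, Finset.sum_range_sub']
    simp
  have hsqrt := (hsum.tendsto_atTop_zero.div_const (a * (1 - a))).sqrt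
  rw [zero_div, Real.sqrt_zero] at hsqrt
  refine tendsto_zero_iff_norm_tendsto_zero.mpr (hsqrt.congr fun n => ?_)
  rw [mul_div_cancel_left₀ _ hc.ne', Real.sqrt_sq (norm_nonneg _)]

theorem orthogonal_range_sub_one_le_eqLocus (hU : ∀ x, ‖U x‖ ≤ ‖x‖) :
    (LinearMap.range ((U - 1 : E →L[ℝ] E) : E →ₗ[ℝ] E))ᗮ ≤ U.eqLocus (1 : E →L[ℝ] E) := by
  intro x hx
  have hinv : ∀ y, inner ℝ (U y) x = inner ℝ y x := by
    simpa [Submodule.mem_orthogonal, inner_sub_left, sub_eq_zero] using hx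
  refine LinearMap.mem_eqLocus.mpr (eq_of_norm_le_re_inner_eq_norm_sq (𝕜 := ℝ) (hU x) ?_)
  simp [hinv]

theorem tendsto_pow_convexComb_apply_starProjection [CompleteSpace E] (hU : ∀ x, ‖U x‖ = ‖x‖)
    (ha₀ : 0 < a) (ha₁ : a < 1) (x : E) :
    Tendsto (fun n => ((a • (1 : E →L[ℝ] E) + (1 - a) • U) ^ n) x) atTop
      (𝓝 ((U.eqLocus (1 : E →L[ℝ] E)).starProjection x)) := by
  set P : E →L[ℝ] E := a • 1 + (1 - a) • U
  set K := U.eqLocus (1 : E →L[ℝ] E)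
  have hfix : ∀ n, (P ^ n) (K.starProjection x) = K.starProjection x := by
    have hU₁ : U (K.starProjection x) = K.starProjection x :=
      LinearMap.mem_eqLocus.mp (K.starProjection_apply_mem x)
    have hP : P (K.starProjection x) = K.starProjection x := by
      rw [add_apply, smul_apply, smul_apply, one_apply_eq_self, hU₁, ← add_smul, add_sub_cancel,
        one_smul]
    intro n
    rw [FunLike.coe_pow_eq_iterate]
    exact Function.iterate_fixed hP n
  have hclosed : IsClosed {y | Tendsto (fun n => (P ^ n) y) atTop (𝓝 0)} := by
    refine (LipschitzWith.uniformEquicontinuous _ 1 fun n => ?_).equicontinuous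
      |>.isClosed_setOfPred_tendsto continuous_const
    rw [FunLike.coe_pow_eq_iterate, ← one_pow n]
    exact (lipschitzWith_one_convexComb hU ha₀.le ha₁.le).iterate n
  have hrange : (LinearMap.range ((U - 1 : E →L[ℝ] E) : E →ₗ[ℝ] E) : Set E) ⊆
      {y | Tendsto (fun n => (P ^ n) y) atTop (𝓝 0)} := by
    rintro _ ⟨y, rfl⟩
    have hy : ((U - 1 : E →L[ℝ] E) : E →ₗ[ℝ] E) y = -(y - U y) := by
      rw [ContinuousLinearMap.coe_coe, sub_apply, one_apply_eq_self, neg_sub]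
    simpa only [Set.mem_ofPred_eq, hy, map_neg, neg_zero] using
      (tendsto_pow_convexComb_apply_sub hU ha₀ ha₁ y).neg
  have hdense : x - K.starProjection x ∈
      closure (LinearMap.range ((U - 1 : E →L[ℝ] E) : E →ₗ[ℝ] E) : Set E) := by
    rw [← Submodule.topologicalClosure_coe, ← Submodule.orthogonal_orthogonal_eq_closure]
    exact Submodule.orthogonal_le (orthogonal_range_sub_one_le_eqLocus fun y => (hU y).le)
      (K.sub_starProjection_mem_orthogonal x)
  have hlim := (closure_minimal hrange hclosed hdense).add_const (K.starProjection x)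
  rw [zero_add] at hlim
  refine hlim.congr fun n => ?_
  rw [map_sub, hfix, sub_add_cancel]

end ConvexCombination

namespace MeasureTheory

section Koopman

variable {X E : Type*} [MeasurableSpace X] {μ : Measure X} [NormedAddCommGroup E] {p : ENNReal}

theorem Lp.norm_apply_eq_of_coeFn_ae_eq_comp {S : X → X} (hS : MeasurePreserving S μ μ)
    {U : Lp E p μ → Lp E p μ} (hU : ∀ f : Lp E p μ, (U f : X → E) =ᵐ[μ] fun x => f (S x))
    (f : Lp E p μ) : ‖U f‖ = ‖f‖ := by
  have : U f = Lp.compMeasurePreserving S hS f :=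
    Lp.ext ((hU f).trans (Lp.coeFn_compMeasurePreserving f hS).symm)
  rw [this, Lp.norm_compMeasurePreserving]

theorem Lp.apply_const_of_coeFn_ae_eq_comp [IsFiniteMeasure μ] {S : X → X}
    (hS : MeasurePreserving S μ μ) {U : Lp E p μ → Lp E p μ}
    (hU : ∀ f : Lp E p μ, (U f : X → E) =ᵐ[μ] fun x => f (S x)) (c : E) :
    U (Lp.const p μ c) = Lp.const p μ c :=
  Lp.ext <| (hU _).trans <| (hS.quasiMeasurePreserving.ae_eq_comp (Lp.coeFn_const p μ c)).trans
    (Lp.coeFn_const p μ c).symm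

theorem Lp.exists_eq_const_of_apply_eq_self [IsFiniteMeasure μ] {T : X ≃ X} (hT : Ergodic T μ)
    {U : Lp E p μ → Lp E p μ} (hU : ∀ f : Lp E p μ, (U f : X → E) =ᵐ[μ] fun x => f (T.symm x))
    {f : Lp E p μ} (hf : U f = f) : ∃ c, f = Lp.const p μ c := by
  have hsymm : (fun x => f (T.symm x)) =ᵐ[μ] f := by simpa [hf] using (hU f).symm
  have hinv : f ∘ T =ᵐ[μ] f := by
    simpa [Function.comp_def] using (hT.quasiMeasurePreserving.ae_eq_comp hsymm).symm
  obtain ⟨c, hc⟩ := hT.ae_eq_const_of_ae_eq_comp_ae (Lp.aestronglyMeasurable f) hinv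
  exact ⟨c, Lp.ext (hc.trans (Lp.coeFn_const p μ c).symm)⟩

end Koopman

section L2

variable {X : Type*} [MeasurableSpace X] {μ : Measure X}

theorem L2.inner_const_one_left [IsFiniteMeasure μ] (f : Lp ℝ 2 μ) :
    inner ℝ (Lp.const 2 μ (1 : ℝ)) f = ∫ x, f x ∂μ := by
  rw [← indicatorConstLp_univ, L2.inner_indicatorConstLp_one, setIntegral_univ]

theorem L2.starProjection_span_const_one [IsProbabilityMeasure μ] (f : Lp ℝ 2 μ) :
    (ℝ ∙ Lp.const 2 μ (1 : ℝ)).starProjection f = (∫ x, f x ∂μ) • Lp.const 2 μ (1 : ℝ) := by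
  have hnorm : ‖Lp.const 2 μ (1 : ℝ)‖ = 1 := by
    simp [Lp.norm_const']
  rw [Submodule.starProjection_singleton, L2.inner_const_one_left, hnorm]
  simp

theorem L2.eqLocus_eq_span_const_one [IsFiniteMeasure μ] {T : X ≃ X} (hT : Ergodic T μ)
    (hTsymm : MeasurePreserving T.symm μ μ) {U : Lp ℝ 2 μ →L[ℝ] Lp ℝ 2 μ}
    (hU : ∀ f : Lp ℝ 2 μ, (U f : X → ℝ) =ᵐ[μ] fun x => f (T.symm x)) :
    U.eqLocus (1 : Lp ℝ 2 μ →L[ℝ] Lp ℝ 2 μ) = ℝ ∙ Lp.const 2 μ (1 : ℝ) := by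
  have hconst : ∀ c : ℝ, c • Lp.const 2 μ (1 : ℝ) = Lp.const 2 μ c := fun c => by
    simpa using ((Lp.constₗ 2 μ ℝ).map_smul c (1 : ℝ)).symm
  ext f
  rw [LinearMap.mem_eqLocus, Submodule.mem_span_singleton]
  constructor
  · intro hf
    obtain ⟨c, rfl⟩ := Lp.exists_eq_const_of_apply_eq_self hT hU hf
    exact ⟨c, hconst c⟩
  · rintro ⟨c, rfl⟩
    rw [hconst]
    exact Lp.apply_const_of_coeFn_ae_eq_comp hTsymm hU c

end L2

end MeasureTheory

theorem convex_combination_powers_tendsto_proj_general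
    {X : Type*} [MeasurableSpace X] (μ : Measure X) [IsProbabilityMeasure μ]
    (T : X ≃ X) (hTsymm : MeasurePreserving T.symm μ μ)
    (hErg : Ergodic ⇑T μ)
    (U : Lp ℝ 2 μ →L[ℝ] Lp ℝ 2 μ)
    (hU : ∀ f : Lp ℝ 2 μ, (U f : X → ℝ) =ᵐ[μ] fun x => f (T.symm x))
    (a : ℝ) (ha0 : 0 < a) (ha1 : a < 1) :
    ∀ f g : Lp ℝ 2 μ,
      Tendsto (fun n =>
          (inner ℝ (((a • (1 : Lp ℝ 2 μ →L[ℝ] Lp ℝ 2 μ) + (1 - a) • U) ^ n) f) g : ℝ))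
        atTop (nhds ((∫ x, f x ∂μ) * ∫ x, g x ∂μ)) := by
  intro f g
  have hUiso : ∀ f, ‖U f‖ = ‖f‖ := Lp.norm_apply_eq_of_coeFn_ae_eq_comp hTsymm hU
  have hP := (tendsto_pow_convexComb_apply_starProjection hUiso ha0 ha1 f).inner (𝕜 := ℝ)
    (tendsto_const_nhds (x := g))
  simpa only [L2.eqLocus_eq_span_const_one hErg hTsymm hU, L2.starProjection_span_const_one,
    real_inner_smul_left, L2.inner_const_one_left] using hP

/-- if `U` is the Koopman operator of an ergodic, weakly mixing
measure-preserving transformation `T` and `0 < a < 1`, then the powers of the Markov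
operator `P = a I + (1-a) U` converge to `Θ` (the projection onto constants) in the weak
operator topology: `⟨P^n f, g⟩ → (∫ f)(∫ g)`.  Weak mixing is expressed by the Cesàro
convergence `(1/N) ∑_{n<N} |⟨U^n f, g⟩ - (∫ f)(∫ g)| → 0`. -/
theorem convex_combination_powers_tendsto_proj
    {X : Type*} [MeasurableSpace X] (μ : Measure X) [IsProbabilityMeasure μ]
    (T : X ≃ X) (hT : MeasurePreserving T μ μ) (hTsymm : MeasurePreserving T.symm μ μ)
    (hErg : Ergodic ⇑T μ)
    (U : Lp ℝ 2 μ →L[ℝ] Lp ℝ 2 μ)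
    (hU : ∀ f : Lp ℝ 2 μ, (U f : X → ℝ) =ᵐ[μ] fun x => f (T.symm x))
    (hwm : ∀ f g : Lp ℝ 2 μ,
      Tendsto (fun N : ℕ => (N : ℝ)⁻¹ * ∑ n ∈ Finset.range N,
          |(inner ℝ ((U ^ n) f) g : ℝ) - (∫ x, f x ∂μ) * ∫ x, g x ∂μ|) atTop (nhds 0))
    (a : ℝ) (ha0 : 0 < a) (ha1 : a < 1) :
    ∀ f g : Lp ℝ 2 μ,
      Tendsto (fun n =>
          (inner ℝ (((a • (1 : Lp ℝ 2 μ →L[ℝ] Lp ℝ 2 μ) + (1 - a) • U) ^ n) f) g : ℝ))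
        atTop (nhds ((∫ x, f x ∂μ) * ∫ x, g x ∂μ)) :=
  convex_combination_powers_tendsto_proj_general μ T hTsymm hErg U hU a ha0 ha1
end

section
/- Let T be a weakly mixing invertible measure-preserving transformation with Koopman operator U, and suppose ν is an ergodic self-joining of T that is invariant under T^m × Id for some m ≠ 0. If T^m is ergodic, then ν = μ × μ. -/
/-!
Fix a measurable `B`. The measure `A ↦ ν (A ×ˢ B)` is dominated by the first marginal `μ` and,
since `ν` is invariant under `T^m × id`, it is `T^m`-invariant. Ergodicity of `T^m` forces an
invariant measure absolutely continuous with respect to `μ` to be a multiple of `μ`; comparing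
total masses, `ν (A ×ˢ B) = μ A * μ B`.
-/

open MeasureTheory

namespace MeasureTheory.Measure

variable {X Y : Type*} [MeasurableSpace X] [MeasurableSpace Y] {ν : Measure (X × Y)}

theorem fst_restrict_snd_preimage_apply_s11 {A : Set X} {B : Set Y} (hA : MeasurableSet A) :
    (ν.restrict (Prod.snd ⁻¹' B)).fst A = ν (A ×ˢ B) := by
  rw [fst_apply hA, restrict_apply (measurable_fst hA)]
  rfl

theorem measurePreserving_fst_restrict_snd_preimage {f : X → X} (hf : Measurable f)
    (hν : ν.map (Prod.map f id) = ν) {B : Set Y} (hB : MeasurableSet B) :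
    MeasurePreserving f (ν.restrict (Prod.snd ⁻¹' B)).fst (ν.restrict (Prod.snd ⁻¹' B)).fst := by
  have hfid : Measurable (Prod.map f (id : Y → Y)) := hf.prodMap measurable_id
  refine ⟨hf, ?_⟩
  calc ((ν.restrict (Prod.snd ⁻¹' B)).fst).map f
      = ((ν.map (Prod.map f id)).restrict (Prod.snd ⁻¹' B)).fst := by
        rw [restrict_map hfid (measurable_snd hB), fst, fst, map_map hf measurable_fst,
          map_map measurable_fst hfid]
        rfl
    _ = (ν.restrict (Prod.snd ⁻¹' B)).fst := by rw [hν]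

end MeasureTheory.Measure

open Measure in
theorem Ergodic.eq_fst_prod_snd_of_map_prodMap_id_eq {X Y : Type*} [MeasurableSpace X]
    [MeasurableSpace Y] {f : X → X} {ν : Measure (X × Y)} [IsProbabilityMeasure ν]
    (hf : Ergodic f ν.fst) (hν : ν.map (Prod.map f id) = ν) : ν = ν.fst.prod ν.snd := by
  refine (prod_eq fun A B hA hB => ?_).symm
  have hρ : (ν.restrict (Prod.snd ⁻¹' B)).fst ≪ ν.fst :=
    absolutelyContinuous_of_le (fst_mono restrict_le_self)
  obtain ⟨c, hc⟩ := hf.eq_smul_of_absolutelyContinuous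
    (measurePreserving_fst_restrict_snd_preimage hf.measurable hν hB) hρ
  have hcB : c = ν.snd B := by
    simpa [hc, snd_apply hB, Set.univ_prod] using
      fst_restrict_snd_preimage_apply_s11 (ν := ν) (B := B) MeasurableSet.univ
  calc ν (A ×ˢ B) = (c • ν.fst) A := by rw [← hc, fst_restrict_snd_preimage_apply_s11 hA]
    _ = ν.fst A * ν.snd B := by rw [hcB, Measure.smul_apply, smul_eq_mul, mul_comm]

theorem ergodic_selfJoining_invariant_under_power_prod_id_eq_prod_general
    {X : Type*} [MeasurableSpace X] (μ : Measure X)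
    (T : X ≃ X)
    (m : ℤ) (hErg : Ergodic ⇑(T ^ m) μ)
    (ν : Measure (X × X)) [IsProbabilityMeasure ν]
    (hνfst : ν.fst = μ) (hνsnd : ν.snd = μ)
    (hminv : Measure.map (Prod.map ⇑(T ^ m) id) ν = ν) :
    ν = μ.prod μ := by
  rw [← hνfst] at hErg
  simpa only [hνfst, hνsnd] using hErg.eq_fst_prod_snd_of_map_prodMap_id_eq hminv

/-- If `T` is a weakly mixing invertible measure-preserving transformation,
`ν` is an ergodic self-joining of `T` which is invariant under `T^m × Id` for some `m ≠ 0`,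
and `T^m` is ergodic, then `ν = μ × μ`. -/
theorem ergodic_selfJoining_invariant_under_power_prod_id_eq_prod
    {X : Type*} [MeasurableSpace X] (μ : Measure X) [IsProbabilityMeasure μ]
    (T : X ≃ X) (hT : MeasurePreserving T μ μ) (hTsymm : MeasurePreserving T.symm μ μ)
    (hwm : Ergodic (Prod.map ⇑T ⇑T) (μ.prod μ))   -- weak mixing of `T`
    (m : ℤ) (hm : m ≠ 0) (hErg : Ergodic ⇑(T ^ m) μ)
    (ν : Measure (X × X)) [IsProbabilityMeasure ν]
    (hνinv : Measure.map (Prod.map ⇑T ⇑T) ν = ν)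
    (hνfst : ν.fst = μ) (hνsnd : ν.snd = μ)
    (hνerg : Ergodic (Prod.map ⇑T ⇑T) ν)
    (hminv : Measure.map (Prod.map ⇑(T ^ m) id) ν = ν) :
    ν = μ.prod μ :=
  ergodic_selfJoining_invariant_under_power_prod_id_eq_prod_general μ T m hErg ν hνfst hνsnd hminv
end
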